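/- For p ≥ 2 and real numbers a, b: |a + b|^p ≤ |a|^p + p|a|^{p−2}a b + (1/2)p(p−1)(|a| + |b|)^{p−2} b². Consequently the second-order Taylor remainder of x ↦ |x|^p is controlled as needed in the Itô formula for the p-th power of the L_p norm. -/

import Mathlib

/-!
With `K = p(p-1)(|a|+|b|)^(p-2)`, the derivative `x ↦ p|x|^(p-2)x` of `|x|^p` is `K`-Lipschitz on
`[-(|a|+|b|), |a|+|b|]`, by the mean value theorem applied to `x ↦ |x|^q x`, whose derivative is
`(q+1)|x|^q`. The estimate is then the usual quadratic upper bound for a function with Lipschitz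
derivative along the segment from `a` to `a + b`.
-/
open Real Set Filter Topology

theorem hasDerivAt_abs_rpow_mul_self {q : ℝ} (hq : 0 ≤ q) (x : ℝ) :
    HasDerivAt (fun y : ℝ => |y| ^ q * y) ((q + 1) * |x| ^ q) x := by
  rcases hq.eq_or_lt with rfl | hq
  · simpa using hasDerivAt_id' x
  rcases eq_or_ne x 0 with rfl | hx
  · have hcont : Tendsto (fun y : ℝ => |y| ^ q) (𝓝 0) (𝓝 0) := by
      simpa [zero_rpow hq.ne'] using
        ((continuous_abs.rpow_const fun _ => Or.inr hq.le).tendsto 0)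
    rw [hasDerivAt_iff_tendsto_slope, abs_zero, zero_rpow hq.ne', mul_zero]
    refine (hcont.mono_left nhdsWithin_le_nhds).congr' ?_
    filter_upwards [self_mem_nhdsWithin] with y (hy : y ≠ 0)
    simp [slope_def_field, hy]
  · have hx' : |x| ≠ 0 := abs_ne_zero.mpr hx
    refine (((hasDerivAt_abs hx).rpow_const (Or.inl hx')).mul (hasDerivAt_id' x)).congr_deriv ?_
    rw [rpow_sub_one hx']
    field_simp
    linear_combination q * sign_mul_self x

theorem abs_rpow_mul_self_sub_le {q M x y : ℝ} (hq : 0 ≤ q) (hx : |x| ≤ M) (hy : |y| ≤ M) :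
    |(|y| ^ q * y) - |x| ^ q * x| ≤ (q + 1) * M ^ q * |y - x| := by
  refine (convex_Icc (-M) M).norm_image_sub_le_of_norm_hasDerivWithin_le
    (fun z _ => (hasDerivAt_abs_rpow_mul_self hq z).hasDerivWithinAt) (fun z hz => ?_)
    (abs_le.mp hx) (abs_le.mp hy)
  have hzM : |z| ≤ M := abs_le.mpr hz
  rw [Real.norm_eq_abs, abs_of_nonneg (by positivity)]
  gcongr

theorem le_add_mul_add_sq_of_hasDerivAt {f f' : ℝ → ℝ} {a b K : ℝ}
    (hf : ∀ x, HasDerivAt f (f' x) x)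
    (hf' : ∀ t ∈ Ioo (0 : ℝ) 1, |f' (a + t * b) - f' a| ≤ K * (t * |b|)) :
    f (a + b) ≤ f a + f' a * b + K / 2 * b ^ 2 := by
  set g : ℝ → ℝ := fun t => f a + f' a * (t * b) + K / 2 * (t * b) ^ 2 - f (a + t * b)
  have hg : ∀ t, HasDerivAt g (f' a * b + K * t * b ^ 2 - f' (a + t * b) * b) t := by
    intro t
    have hline : HasDerivAt (fun t : ℝ => t * b) b t := by
      simpa using (hasDerivAt_id t).mul_const b
    refine ((((hline.const_mul (f' a)).const_add (f a)).add
      ((hline.pow 2).const_mul (K / 2))).sub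
      ((hf (a + t * b)).comp t (hline.const_add a))).congr_deriv ?_
    simp only [Nat.cast_ofNat]
    ring
  have hg_mono : MonotoneOn g (Icc 0 1) := by
    refine monotoneOn_of_deriv_nonneg (convex_Icc 0 1)
      (fun t _ => (hg t).continuousAt.continuousWithinAt)
      (fun t _ => (hg t).differentiableAt.differentiableWithinAt) fun t ht => ?_
    rw [interior_Icc] at ht
    have hbound : (f' (a + t * b) - f' a) * b ≤ K * t * b ^ 2 := by
      calc (f' (a + t * b) - f' a) * b ≤ |f' (a + t * b) - f' a| * |b| := by
            rw [← abs_mul]; exact le_abs_self _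
        _ ≤ K * (t * |b|) * |b| := by gcongr; exact hf' t ht
        _ = K * t * b ^ 2 := by rw [← sq_abs b]; ring
    rw [(hg t).deriv]
    linarith
  simpa [g] using hg_mono (left_mem_Icc.mpr zero_le_one) (right_mem_Icc.mpr zero_le_one) zero_le_one

/-- Second-order Taylor estimate for `x ↦ |x|^p`, `p ≥ 2`:
`|a+b|^p ≤ |a|^p + p|a|^{p−2}ab + (1/2)p(p−1)(|a|+|b|)^{p−2}b²`. -/
theorem stmt16 (p a b : ℝ) (hp : 2 ≤ p) :
    |a + b| ^ p ≤
      |a| ^ p + p * |a| ^ (p - 2) * a * b +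
        (1 / 2) * p * (p - 1) * (|a| + |b|) ^ (p - 2) * b ^ 2 := by
  have hq : 0 ≤ p - 2 := by linarith
  have hderiv_lipschitz : ∀ t ∈ Ioo (0 : ℝ) 1,
      |p * |a + t * b| ^ (p - 2) * (a + t * b) - p * |a| ^ (p - 2) * a| ≤
        p * (p - 1) * (|a| + |b|) ^ (p - 2) * (t * |b|) := by
    intro t ht
    have hta : |a + t * b| ≤ |a| + |b| := by
      calc |a + t * b| ≤ |a| + t * |b| := by
            simpa [abs_mul, abs_of_pos ht.1] using abs_add_le a (t * b)
        _ ≤ |a| + |b| := by nlinarith [abs_nonneg b, ht.2]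
    have hlip := abs_rpow_mul_self_sub_le hq (le_add_of_nonneg_right (abs_nonneg b)) hta
    rw [show p - 2 + 1 = p - 1 by ring, add_sub_cancel_left, abs_mul, abs_of_pos ht.1] at hlip
    calc |p * |a + t * b| ^ (p - 2) * (a + t * b) - p * |a| ^ (p - 2) * a|
        = p * |(|a + t * b| ^ (p - 2) * (a + t * b)) - |a| ^ (p - 2) * a| := by
          rw [mul_assoc, mul_assoc, ← mul_sub, abs_mul, abs_of_nonneg (by linarith)]
      _ ≤ p * ((p - 1) * (|a| + |b|) ^ (p - 2) * (t * |b|)) := by gcongr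
      _ = _ := by ring
  have key := le_add_mul_add_sq_of_hasDerivAt
    (fun x => hasDerivAt_abs_rpow x (by linarith : 1 < p)) hderiv_lipschitz
  linarith [key]
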